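/- Let κ be an infinite cardinal and let ⟨s_β : β < γ⟩ with γ ≤ κ be a capped sequence in 𝕊_κ: s_{β+1} is a capped extension of s_β for all β (s_β ⊊ s_{β+1}, s_{β+1} takes value 0 at its top and takes only positive values strictly between |s_β| and its top), and at limit ordinals λ < γ, s_λ = (⋃_{β<λ} s_β)⌢⟨0⟩. Then the sequence has a least upper bound in (𝕊_κ, ⊆), namely (⋃_{β<γ} s_β)⌢⟨0⟩. -/

import Mathlib

/-!
Write `L` for `sSup (l '' Iio γ)`. Below `L` the function `u` agrees with some `s β`, so every
clause of `𝕊_κ` at a point below `L`, or for an interval inside some domain `l β`, is inherited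
from `s β`. The tops of the successor stages are zeros of every common extension of the `s β`
and are cofinal in the limit `L`; this makes `u L = 0` the required value at `L` and forces any
upper bound in `𝕊_κ` to take the value `0` there as well.

For the order-type clause, an interval on which `u` is positive cannot pass the top of a stage,
so it lies inside some `l β`. A zero of `u` in `[l 0, L]` is the top of the first stage
containing it (or `L` itself), so these zeros embed increasingly into `γ + 1 < κ·ω`. Finally
`L < κ⁺` because `κ⁺` is regular and `γ ≤ κ`.
-/

open Cardinal

universe u

/-- The order type of a set of ordinals (one universe up). -/
noncomputable def otp (s : Set Ordinal.{u}) : Ordinal.{u + 1} :=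
  @Ordinal.type s (Subrel ((· < ·) : Ordinal.{u} → Ordinal.{u} → Prop) (· ∈ s)) inferInstance

/-- `C` is unbounded in (cofinal below) `x`. -/
def UnbddBelow (C : Set Ordinal.{u}) (x : Ordinal.{u}) : Prop :=
  ∀ β < x, ∃ α ∈ C, β < α ∧ α < x

/-- The set `Cₙᵗ = {α < l : t α ≤ n}`. -/
def Ct (t : Ordinal.{u} → ℕ) (l : Ordinal.{u}) (n : ℕ) : Set Ordinal.{u} :=
  {α | α < l ∧ t α ≤ n}

/-- Membership in `𝕊_κ`: `t` has domain a successor ordinal `l < κ⁺`, each `Cₙᵗ` is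
closed, at limit ordinals `t` takes the least value `n` with `Cₙᵗ` unbounded below, and
every interval disjoint from `Cₙ₋₁ᵗ` meets `Cₙᵗ` in a set of order type `< κ·ω`. -/
def InSkappa (κ : Cardinal.{u}) (l : Ordinal.{u}) (t : Ordinal.{u} → ℕ) : Prop :=
  (∃ δ, l = δ + 1) ∧ l < (Order.succ κ).ord ∧
  (∀ n : ℕ, ∀ x < l, Order.IsSuccLimit x → UnbddBelow (Ct t l n) x → t x ≤ n) ∧
  (∀ x < l, Order.IsSuccLimit x →
    UnbddBelow (Ct t l (t x)) x ∧ ∀ m : ℕ, UnbddBelow (Ct t l m) x → t x ≤ m) ∧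
  (∀ n : ℕ, ∀ I : Set Ordinal.{u}, I ⊆ Set.Iio l → I.OrdConnected →
    (∀ x ∈ I, n ≤ t x) →
    otp (Ct t l n ∩ I) < Ordinal.lift.{u + 1} (κ.ord * Ordinal.omega0))

open Set

lemma Ordinal.isPrincipal_add_mul_omega0 (a : Ordinal.{u}) :
    Ordinal.IsPrincipal (· + ·) (a * Ordinal.omega0) :=
  Ordinal.isPrincipal_add_mul_of_isPrincipal_add a Ordinal.one_lt_omega0.ne'
    Ordinal.isPrincipal_add_omega0

lemma Ordinal.add_one_lt_mul_omega0 {a b : Ordinal.{u}} (ha : 0 < a) (hb : b ≤ a) :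
    b + 1 < a * Ordinal.omega0 := by
  have hlt : a < a * Ordinal.omega0 := by
    simpa using mul_lt_mul_of_pos_left Ordinal.one_lt_omega0 ha
  exact Ordinal.isPrincipal_add_mul_omega0 a (hb.trans_lt hlt)
    ((Order.one_le_iff_pos.2 ha).trans_lt hlt)

lemma otp_mono {s t : Set Ordinal.{u}} (h : s ⊆ t) : otp s ≤ otp t :=
  RelEmbedding.ordinal_type_le (Subrel.inclusionEmbedding (· < ·) h)

lemma otp_union_le {s t : Set Ordinal.{u}} (h : ∀ a ∈ s, ∀ b ∈ t, a < b) :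
    otp (s ∪ t) ≤ otp s + otp t := by
  classical
  unfold otp
  rw [← Ordinal.type_sum_lex]
  refine RelEmbedding.ordinal_type_le (RelEmbedding.ofMonotone
    (fun x => if hx : x.1 ∈ s then Sum.inl ⟨x.1, hx⟩ else Sum.inr ⟨x.1, x.2.resolve_left hx⟩) ?_)
  intro a b hab
  by_cases ha : a.1 ∈ s <;> by_cases hb : b.1 ∈ s <;> simp only [ha, hb, dif_pos, dif_neg,
    not_false_iff]
  · exact Sum.Lex.inl hab
  · exact Sum.Lex.sep _ _
  · exact absurd (h b.1 hb a.1 (a.2.resolve_left ha)) (lt_asymm hab)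
  · exact Sum.Lex.inr hab

lemma otp_le_lift_of_strictMonoOn {s : Set Ordinal.{u}} {a : Ordinal.{u}}
    {f : Ordinal.{u} → Ordinal.{u}} (hf : StrictMonoOn f s) (hfa : ∀ x ∈ s, f x < a) :
    otp s ≤ Ordinal.lift.{u + 1} a := by
  rw [← Ordinal.typein_ordinal, ← Ordinal.type_subrel]
  exact RelEmbedding.ordinal_type_le
    ⟨⟨fun x => ⟨f x.1, hfa _ x.2⟩, fun x y hxy =>
        Subtype.ext (hf.injOn x.2 y.2 (Subtype.mk_eq_mk.1 hxy))⟩,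
      fun {x y} => hf.lt_iff_lt x.2 y.2⟩

lemma unbddBelow_inter_Iio {C : Set Ordinal.{u}} {x : Ordinal.{u}} :
    UnbddBelow (C ∩ Iio x) x ↔ UnbddBelow C x := by
  simp only [UnbddBelow, mem_inter_iff, mem_Iio]
  grind

section EqOn

variable {w t : Ordinal.{u} → ℕ} {l l' : Ordinal.{u}}

lemma Ct_inter_eq_of_eqOn (h : EqOn w t (Iio l)) (hl : l ≤ l') {I : Set Ordinal.{u}}
    (hI : I ⊆ Iio l) (n : ℕ) : Ct w l' n ∩ I = Ct t l n ∩ I := by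
  ext α
  simp only [Ct, mem_inter_iff, mem_ofPred_eq]
  constructor
  · rintro ⟨⟨-, hα⟩, hαI⟩
    exact ⟨⟨hI hαI, h (hI hαI) ▸ hα⟩, hαI⟩
  · rintro ⟨⟨hαl, hα⟩, hαI⟩
    exact ⟨⟨hαl.trans_le hl, (h hαl).symm ▸ hα⟩, hαI⟩

lemma unbddBelow_Ct_iff_of_eqOn (h : EqOn w t (Iio l)) (hl : l ≤ l') {x : Ordinal.{u}}
    (hx : x ≤ l) (n : ℕ) : UnbddBelow (Ct w l' n) x ↔ UnbddBelow (Ct t l n) x := by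
  rw [← unbddBelow_inter_Iio, Ct_inter_eq_of_eqOn h hl (Iio_subset_Iio hx),
    unbddBelow_inter_Iio]

variable {κ : Cardinal.{u}}

lemma InSkappa.limit_clause_of_eqOn (ht : InSkappa κ l t) (h : EqOn w t (Iio l)) (hl : l ≤ l')
    {x : Ordinal.{u}} (hx : x < l) (hxlim : Order.IsSuccLimit x) :
    UnbddBelow (Ct w l' (w x)) x ∧ ∀ m : ℕ, UnbddBelow (Ct w l' m) x → w x ≤ m := by
  simp only [h hx, unbddBelow_Ct_iff_of_eqOn h hl hx.le]
  exact ht.2.2.2.1 x hx hxlim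

lemma InSkappa.otp_lt_of_eqOn (ht : InSkappa κ l t) (h : EqOn w t (Iio l)) (hl : l ≤ l')
    {n : ℕ} {I : Set Ordinal.{u}} (hIl : I ⊆ Iio l) (hI : I.OrdConnected)
    (hn : ∀ x ∈ I, n ≤ w x) :
    otp (Ct w l' n ∩ I) < Ordinal.lift.{u + 1} (κ.ord * Ordinal.omega0) := by
  rw [Ct_inter_eq_of_eqOn h hl hIl]
  exact ht.2.2.2.2 n I hIl hI fun x hx => h (hIl hx) ▸ hn x hx

end EqOn

section Stage

variable {γ : Ordinal.{u}} {l : Ordinal.{u} → Ordinal.{u}}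

lemma le_sSup_image_Iio {β : Ordinal.{u}} (hβ : β < γ) : l β ≤ sSup (l '' Iio γ) :=
  le_csSup Ordinal.bddAbove_of_small (mem_image_of_mem l hβ)

lemma sSup_image_Iio_le {z : Ordinal.{u}} (h : ∀ β < γ, l β ≤ z) : sSup (l '' Iio γ) ≤ z :=
  csSup_le' (by rintro _ ⟨β, hβ, rfl⟩; exact h β hβ)

lemma exists_lt_of_lt_sSup_image_Iio {a : Ordinal.{u}} (ha : a < sSup (l '' Iio γ)) :
    ∃ β < γ, a < l β := by
  obtain ⟨_, ⟨β, hβ, rfl⟩, hab⟩ := exists_lt_of_lt_csSup' ha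
  exact ⟨β, hβ, hab⟩

lemma lt_sSup_image_Iio (hγ : Order.IsSuccLimit γ) (hl : ∀ β, β + 1 < γ → l β < l (β + 1))
    {β : Ordinal.{u}} (hβ : β < γ) : l β < sSup (l '' Iio γ) :=
  (hl β (hγ.add_one_lt hβ)).trans_le (le_sSup_image_Iio (hγ.add_one_lt hβ))

lemma isSuccLimit_sSup_image_Iio (hγ : Order.IsSuccLimit γ)
    (hl : ∀ β, β + 1 < γ → l β < l (β + 1)) : Order.IsSuccLimit (sSup (l '' Iio γ)) := by
  refine ⟨not_isMin_of_lt (lt_sSup_image_Iio hγ hl hγ.bot_lt), ?_⟩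
  refine Order.isSuccPrelimit_of_succ_lt fun a ha => ?_
  obtain ⟨β, hβ, hal⟩ := exists_lt_of_lt_sSup_image_Iio ha
  exact (Order.succ_le_of_lt hal).trans_lt (lt_sSup_image_Iio hγ hl hβ)

lemma sSup_image_Iio_lt_ord_succ {κ : Cardinal.{u}} (hκ : ℵ₀ ≤ κ) (hγ : γ ≤ κ.ord)
    (hl : ∀ β < γ, l β < (Order.succ κ).ord) : sSup (l '' Iio γ) < (Order.succ κ).ord := by
  refine Ordinal.sSup_lt_of_lt_cof ?_ (by rintro _ ⟨β, hβ, rfl⟩; exact hl β hβ)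
  rw [← Ordinal.lift_cof, (Cardinal.isRegular_succ hκ).cof_ord]
  calc #(l '' Iio γ) ≤ #(Iio γ) := mk_image_le
    _ = Cardinal.lift.{u + 1} γ.card := mk_Iio_ordinal γ
    _ ≤ Cardinal.lift.{u + 1} κ := Cardinal.lift_le.2 (Cardinal.card_le_of_le_ord hγ)
    _ < Cardinal.lift.{u + 1} (Order.succ κ) := Cardinal.lift_lt.2 (Order.lt_succ κ)

/-- The first stage `β < γ` whose domain contains `z`, or `γ` if there is none. -/
noncomputable def stageOf (γ : Ordinal.{u}) (l : Ordinal.{u} → Ordinal.{u}) (z : Ordinal.{u}) :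
    Ordinal.{u} :=
  sInf {β | β < γ → z < l β}

lemma stageOf_le (z : Ordinal.{u}) : stageOf γ l z ≤ γ :=
  csInf_le' fun h => (lt_irrefl γ h).elim

lemma lt_of_stageOf_lt {z : Ordinal.{u}} (h : stageOf γ l z < γ) : z < l (stageOf γ l z) :=
  csInf_mem (s := {β | β < γ → z < l β}) ⟨γ, fun h => (lt_irrefl γ h).elim⟩ h

lemma le_of_lt_stageOf {z β : Ordinal.{u}} (h : β < stageOf γ l z) : l β ≤ z := by
  have hβ : ¬(β < γ → z < l β) := notMem_of_lt_csInf' h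
  push Not at hβ
  exact hβ.2

lemma stageOf_mono : Monotone (stageOf γ l) := fun _ _ h =>
  csInf_le' fun hlt => h.trans_lt (lt_of_stageOf_lt hlt)

lemma sSup_image_Iio_le_of_stageOf_eq {z : Ordinal.{u}} (h : stageOf γ l z = γ) :
    sSup (l '' Iio γ) ≤ z :=
  sSup_image_Iio_le fun _ hβ => le_of_lt_stageOf (h ▸ hβ)

end Stage

structure IsCappedSeq (κ : Cardinal.{u}) (γ : Ordinal.{u}) (l : Ordinal.{u} → Ordinal.{u})
    (s : Ordinal.{u} → Ordinal.{u} → ℕ) : Prop where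
  mem : ∀ β < γ, InSkappa κ (l β) (s β)
  succ : ∀ β, β + 1 < γ →
    l β < l (β + 1) ∧ (∀ ξ < l β, s (β + 1) ξ = s β ξ) ∧
    s (β + 1) (Ordinal.pred (l (β + 1))) = 0 ∧
    ∀ ξ, l β ≤ ξ → ξ < Ordinal.pred (l (β + 1)) → 0 < s (β + 1) ξ
  limit : ∀ lam < γ, Order.IsSuccLimit lam →
    l lam = sSup (l '' Iio lam) + 1 ∧
    (∀ β < lam, ∀ ξ < l β, s lam ξ = s β ξ) ∧
    s lam (sSup (l '' Iio lam)) = 0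

namespace IsCappedSeq

variable {κ : Cardinal.{u}} {γ : Ordinal.{u}} {l : Ordinal.{u} → Ordinal.{u}}
  {s : Ordinal.{u} → Ordinal.{u} → ℕ} {u : Ordinal.{u} → ℕ}

lemma exists_top (hS : IsCappedSeq κ γ l s) {β : Ordinal.{u}} (hβ : β + 1 < γ) :
    ∃ δ, l (β + 1) = δ + 1 ∧ l β ≤ δ ∧ s (β + 1) δ = 0 ∧
      ∀ ξ, l β ≤ ξ → ξ < δ → 0 < s (β + 1) ξ := by
  obtain ⟨δ, hδ⟩ := (hS.mem _ hβ).1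
  obtain ⟨hlt, -, hzero, hpos⟩ := hS.succ β hβ
  rw [hδ, Ordinal.pred_add_one] at hzero hpos
  exact ⟨δ, hδ, Order.lt_add_one_iff.1 (hδ ▸ hlt), hzero, hpos⟩

lemma eq_add_one_of_succ (hS : IsCappedSeq κ γ l s) {β z : Ordinal.{u}} (hβ : β + 1 < γ)
    (hlz : l β ≤ z) (hzl : z < l (β + 1)) (hz : s (β + 1) z = 0) : l (β + 1) = z + 1 := by
  obtain ⟨δ, hδ, -, -, hpos⟩ := hS.exists_top hβ
  have hzδ : z ≤ δ := Order.lt_add_one_iff.1 (hδ ▸ hzl)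
  have hδz : δ ≤ z := not_lt.1 fun h => (hpos z hlz h).ne' hz
  rw [hδ, le_antisymm hzδ hδz]

lemma eq_add_one_of_limit (hS : IsCappedSeq κ γ l s) {lam z : Ordinal.{u}} (hlam : lam < γ)
    (hlim : Order.IsSuccLimit lam) (hlz : ∀ β < lam, l β ≤ z) (hzl : z < l lam) :
    l lam = z + 1 := by
  have hl := (hS.limit lam hlam hlim).1
  have hsz : sSup (l '' Iio lam) ≤ z := sSup_image_Iio_le hlz
  have hzs : z ≤ sSup (l '' Iio lam) := Order.lt_add_one_iff.1 (hl ▸ hzl)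
  rw [hl, le_antisymm hsz hzs]

lemma eq_add_one_of_stageOf_lt (hS : IsCappedSeq κ γ l s)
    (hu : ∀ β < γ, EqOn u (s β) (Iio (l β))) {z : Ordinal.{u}} (h0 : l 0 ≤ z) (hz : u z = 0)
    (hst : stageOf γ l z < γ) : l (stageOf γ l z) = z + 1 := by
  have hzl := lt_of_stageOf_lt hst
  rcases Ordinal.zero_or_succ_or_isSuccLimit (stageOf γ l z) with h | ⟨β, hβ⟩ | hlim
  · exact absurd (h ▸ hzl) (not_lt.2 h0)
  · have hlβ : l β ≤ z := le_of_lt_stageOf (hβ ▸ Order.lt_succ β)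
    rw [Order.succ_eq_add_one] at hβ
    rw [← hβ] at hst hzl ⊢
    exact hS.eq_add_one_of_succ hst hlβ hzl ((hu _ hst hzl).symm.trans hz)
  · exact hS.eq_add_one_of_limit hst hlim (fun β hβ => le_of_lt_stageOf hβ) hzl

lemma strictMonoOn_stageOf (hS : IsCappedSeq κ γ l s)
    (hu : ∀ β < γ, EqOn u (s β) (Iio (l β))) :
    StrictMonoOn (stageOf γ l) {z | l 0 ≤ z ∧ z ≤ sSup (l '' Iio γ) ∧ u z = 0} := by
  rintro z₁ ⟨h₁, -, hz₁⟩ z₂ ⟨h₂, hz₂L, hz₂⟩ hlt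
  refine (stageOf_mono hlt.le).lt_of_ne fun heq => ?_
  rcases (stageOf_le z₁).lt_or_eq with hst | hst
  · have h := (hS.eq_add_one_of_stageOf_lt hu h₁ hz₁ hst).symm.trans
      (heq ▸ hS.eq_add_one_of_stageOf_lt hu h₂ hz₂ (heq ▸ hst))
    exact hlt.ne (Order.succ_injective (by simpa only [Order.succ_eq_add_one] using h))
  · exact (hz₂L.trans (sSup_image_Iio_le_of_stageOf_eq hst)).not_gt hlt

lemma otp_zeros_le (hS : IsCappedSeq κ γ l s) (hu : ∀ β < γ, EqOn u (s β) (Iio (l β))) :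
    otp {z | l 0 ≤ z ∧ z ≤ sSup (l '' Iio γ) ∧ u z = 0} ≤ Ordinal.lift.{u + 1} (γ + 1) :=
  otp_le_lift_of_strictMonoOn (hS.strictMonoOn_stageOf hu) fun z _ =>
    Order.lt_add_one_iff.2 (stageOf_le z)

lemma unbddBelow_Ct_zero (hS : IsCappedSeq κ γ l s) (hγ : Order.IsSuccLimit γ)
    {w : Ordinal.{u} → ℕ} {lw : Ordinal.{u}} (hw : ∀ β < γ, EqOn w (s β) (Iio (l β)))
    (hlw : sSup (l '' Iio γ) < lw) : UnbddBelow (Ct w lw 0) (sSup (l '' Iio γ)) := by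
  intro b hb
  obtain ⟨β, hβ, hbl⟩ := exists_lt_of_lt_sSup_image_Iio hb
  have hβ1 := hγ.add_one_lt hβ
  obtain ⟨δ, hδ, hlδ, hδ0, -⟩ := hS.exists_top hβ1
  have hδl : δ < l (β + 1) := hδ ▸ lt_add_one δ
  have hδL : δ < sSup (l '' Iio γ) := hδl.trans_le (le_sSup_image_Iio hβ1)
  exact ⟨δ, ⟨hδL.trans hlw, ((hw _ hβ1 hδl).trans hδ0).le⟩, hbl.trans_le hlδ, hδL⟩

lemma limit_clause (hS : IsCappedSeq κ γ l s) (hγ : Order.IsSuccLimit γ)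
    (hu : ∀ β < γ, EqOn u (s β) (Iio (l β))) (hu0 : u (sSup (l '' Iio γ)) = 0)
    {x : Ordinal.{u}} (hx : x < sSup (l '' Iio γ) + 1) (hxlim : Order.IsSuccLimit x) :
    UnbddBelow (Ct u (sSup (l '' Iio γ) + 1) (u x)) x ∧
      ∀ m : ℕ, UnbddBelow (Ct u (sSup (l '' Iio γ) + 1) m) x → u x ≤ m := by
  rcases (Order.lt_add_one_iff.1 hx).lt_or_eq with hxL | rfl
  · obtain ⟨β, hβ, hxl⟩ := exists_lt_of_lt_sSup_image_Iio hxL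
    exact (hS.mem β hβ).limit_clause_of_eqOn (hu β hβ)
      ((le_sSup_image_Iio hβ).trans le_self_add) hxl hxlim
  · rw [hu0]
    exact ⟨hS.unbddBelow_Ct_zero hγ hu (lt_add_one _), fun m _ => Nat.zero_le m⟩

lemma exists_subset_Iio_of_pos (hS : IsCappedSeq κ γ l s) (hγ : Order.IsSuccLimit γ)
    (hu : ∀ β < γ, EqOn u (s β) (Iio (l β))) (hu0 : u (sSup (l '' Iio γ)) = 0)
    {I : Set Ordinal.{u}} (hIL : I ⊆ Iio (sSup (l '' Iio γ) + 1)) (hI : I.OrdConnected)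
    (hpos : ∀ x ∈ I, 0 < u x) : ∃ β < γ, I ⊆ Iio (l β) := by
  rcases I.eq_empty_or_nonempty with rfl | ⟨a, ha⟩
  · exact ⟨0, hγ.bot_lt, empty_subset _⟩
  have haL : a < sSup (l '' Iio γ) :=
    (Order.lt_add_one_iff.1 (hIL ha)).lt_of_ne fun h => (hpos a ha).ne' (h ▸ hu0)
  obtain ⟨β, hβ, hal⟩ := exists_lt_of_lt_sSup_image_Iio haL
  have hβ1 := hγ.add_one_lt hβ
  obtain ⟨δ, hδ, hlδ, hδ0, -⟩ := hS.exists_top hβ1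
  have hδl : δ < l (β + 1) := hδ ▸ lt_add_one δ
  have hδI : δ ∉ I := fun h => (hpos δ h).ne' ((hu _ hβ1 hδl).trans hδ0)
  exact ⟨β + 1, hβ1, fun c hc =>
    (lt_of_not_ge fun hδc => hδI (hI.out ha hc ⟨(hal.trans_le hlδ).le, hδc⟩)).trans hδl⟩

lemma otp_Ct_inter_lt (hS : IsCappedSeq κ γ l s) (hγ : Order.IsSuccLimit γ)
    (hγκ : γ ≤ κ.ord) (hu : ∀ β < γ, EqOn u (s β) (Iio (l β)))
    (hu0 : u (sSup (l '' Iio γ)) = 0) {n : ℕ} {I : Set Ordinal.{u}}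
    (hIL : I ⊆ Iio (sSup (l '' Iio γ) + 1)) (hI : I.OrdConnected) (hn : ∀ x ∈ I, n ≤ u x) :
    otp (Ct u (sSup (l '' Iio γ) + 1) n ∩ I) <
      Ordinal.lift.{u + 1} (κ.ord * Ordinal.omega0) := by
  cases n with
  | succ m =>
    obtain ⟨β, hβ, hIβ⟩ := hS.exists_subset_Iio_of_pos hγ hu hu0 hIL hI
      fun x hx => (Nat.succ_pos m).trans_le (hn x hx)
    exact (hS.mem β hβ).otp_lt_of_eqOn (hu β hβ)
      ((le_sSup_image_Iio hβ).trans le_self_add) hIβ hI hn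
  | zero =>
    -- Below `l 0` the zeros are those of `s 0`; above it they are tops of stages.
    have hsplit : Ct u (sSup (l '' Iio γ) + 1) 0 ∩ I ⊆
        Ct u (sSup (l '' Iio γ) + 1) 0 ∩ (I ∩ Iio (l 0)) ∪
          {z | l 0 ≤ z ∧ z ≤ sSup (l '' Iio γ) ∧ u z = 0} := by
      rintro z ⟨⟨hzL, hz0⟩, hzI⟩
      rcases lt_or_ge z (l 0) with hz | hz
      · exact Or.inl ⟨⟨hzL, hz0⟩, hzI, hz⟩
      · exact Or.inr ⟨hz, Order.lt_add_one_iff.1 hzL, Nat.le_zero.1 hz0⟩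
    have hbelow := (hS.mem 0 hγ.bot_lt).otp_lt_of_eqOn (hu 0 hγ.bot_lt)
      ((le_sSup_image_Iio hγ.bot_lt).trans (le_self_add : _ ≤ sSup (l '' Iio γ) + 1))
      inter_subset_right (hI.inter ordConnected_Iio) fun x _ => Nat.zero_le (u x)
    have habove := (hS.otp_zeros_le hu).trans_lt <| Ordinal.lift_lt.2 <|
      Ordinal.add_one_lt_mul_omega0 (hγ.bot_lt.trans_le hγκ) hγκ
    have hprin : Ordinal.IsPrincipal (· + ·) (Ordinal.lift.{u + 1} (κ.ord * Ordinal.omega0)) := by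
      rw [Ordinal.lift_mul, Ordinal.lift_omega0]
      exact Ordinal.isPrincipal_add_mul_omega0 _
    exact (otp_mono hsplit).trans_lt ((otp_union_le fun a ha b hb => ha.2.2.trans_le hb.1).trans_lt
      (hprin hbelow habove))

lemma inSkappa_sSup_add_one (hS : IsCappedSeq κ γ l s) (hκ : ℵ₀ ≤ κ)
    (hγ : Order.IsSuccLimit γ) (hγκ : γ ≤ κ.ord) (hu : ∀ β < γ, EqOn u (s β) (Iio (l β)))
    (hu0 : u (sSup (l '' Iio γ)) = 0) : InSkappa κ (sSup (l '' Iio γ) + 1) u := by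
  have hlim := fun x hx hxlim => hS.limit_clause hγ hu hu0 (x := x) hx hxlim
  refine ⟨⟨_, rfl⟩, ?_, fun n x hx hxlim h => (hlim x hx hxlim).2 n h, hlim,
    fun n I hIL hI hn => hS.otp_Ct_inter_lt hγ hγκ hu hu0 hIL hI hn⟩
  rw [← Order.succ_eq_add_one]
  exact (Cardinal.isSuccLimit_ord (hκ.trans (Order.le_succ κ))).succ_lt
    (sSup_image_Iio_lt_ord_succ hκ hγκ fun β hβ => (hS.mem β hβ).2.1)

lemma sSup_lt_of_extends (hS : IsCappedSeq κ γ l s) (hγ : Order.IsSuccLimit γ)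
    {lv : Ordinal.{u}} {v : Ordinal.{u} → ℕ} (hv : InSkappa κ lv v)
    (hvs : ∀ β < γ, l β ≤ lv ∧ EqOn v (s β) (Iio (l β))) : sSup (l '' Iio γ) < lv := by
  obtain ⟨δ, rfl⟩ := hv.1
  have hL := isSuccLimit_sSup_image_Iio hγ fun β hβ => (hS.succ β hβ).1
  exact (sSup_image_Iio_le fun β hβ => (hvs β hβ).1).lt_of_ne
    fun h => hL.succ_ne δ (by rw [Order.succ_eq_add_one, h])

lemma eqOn_of_extends (hS : IsCappedSeq κ γ l s) (hγ : Order.IsSuccLimit γ)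
    (hu : ∀ β < γ, EqOn u (s β) (Iio (l β))) (hu0 : u (sSup (l '' Iio γ)) = 0)
    {lv : Ordinal.{u}} {v : Ordinal.{u} → ℕ} (hv : InSkappa κ lv v)
    (hvs : ∀ β < γ, l β ≤ lv ∧ EqOn v (s β) (Iio (l β))) :
    EqOn v u (Iio (sSup (l '' Iio γ) + 1)) := by
  intro ξ hξ
  rcases (Order.lt_add_one_iff.1 (mem_Iio.1 hξ)).lt_or_eq with hξL | rfl
  · obtain ⟨β, hβ, hξl⟩ := exists_lt_of_lt_sSup_image_Iio hξL
    rw [(hvs β hβ).2 hξl, hu β hβ hξl]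
  · have hL := isSuccLimit_sSup_image_Iio hγ fun β hβ => (hS.succ β hβ).1
    have hLv := hS.sSup_lt_of_extends hγ hv hvs
    rw [hu0]
    exact Nat.le_zero.1 ((hv.2.2.2.1 _ hLv hL).2 0
      (hS.unbddBelow_Ct_zero hγ (fun β hβ => (hvs β hβ).2) hLv))

end IsCappedSeq

/-- A capped sequence in `𝕊_κ` of (limit) length at most `κ` has a least upper bound in
`(𝕊_κ, ⊆)`, namely `(⋃_{β<γ} s_β)⌢⟨0⟩`. -/
theorem stmt14 (κ : Cardinal.{u}) (hκ : ℵ₀ ≤ κ) (γ : Ordinal.{u}) (hγ : γ ≤ κ.ord)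
    (hγlim : Order.IsSuccLimit γ) (l : Ordinal.{u} → Ordinal.{u}) (s : Ordinal.{u} → Ordinal.{u} → ℕ)
    (hmem : ∀ β < γ, InSkappa κ (l β) (s β))
    (hcapped : ∀ β, β + 1 < γ →
      l β < l (β + 1) ∧ (∀ ξ < l β, s (β + 1) ξ = s β ξ) ∧
      s (β + 1) (Ordinal.pred (l (β + 1))) = 0 ∧
      ∀ ξ, l β ≤ ξ → ξ < Ordinal.pred (l (β + 1)) → 0 < s (β + 1) ξ)
    (hlimit : ∀ lam < γ, Order.IsSuccLimit lam →
      l lam = sSup (l '' Set.Iio lam) + 1 ∧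
      (∀ β < lam, ∀ ξ < l β, s lam ξ = s β ξ) ∧
      s lam (sSup (l '' Set.Iio lam)) = 0)
    (u : Ordinal.{u} → ℕ)
    (hu : ∀ β < γ, ∀ ξ < l β, u ξ = s β ξ)
    (hu0 : u (sSup (l '' Set.Iio γ)) = 0) :
    InSkappa κ (sSup (l '' Set.Iio γ) + 1) u ∧
    (∀ β < γ, l β ≤ sSup (l '' Set.Iio γ) + 1 ∧ ∀ ξ < l β, u ξ = s β ξ) ∧
    ∀ (lv : Ordinal.{u}) (v : Ordinal.{u} → ℕ), InSkappa κ lv v →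
      (∀ β < γ, l β ≤ lv ∧ ∀ ξ < l β, v ξ = s β ξ) →
      sSup (l '' Set.Iio γ) + 1 ≤ lv ∧ ∀ ξ < sSup (l '' Set.Iio γ) + 1, v ξ = u ξ := by
  have hS : IsCappedSeq κ γ l s := ⟨hmem, hcapped, hlimit⟩
  refine ⟨hS.inSkappa_sSup_add_one hκ hγlim hγ hu hu0,
    fun β hβ => ⟨(le_sSup_image_Iio hβ).trans le_self_add, hu β hβ⟩, fun lv v hv hvs => ?_⟩
  exact ⟨Order.add_one_le_iff.2 (hS.sSup_lt_of_extends hγlim hv hvs),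
    hS.eqOn_of_extends hγlim hu hu0 hv hvs⟩
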